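/- For every ε > 0 there exists m_0 such that for all m ≥ m_0 the following holds: for every function B : [M]^N → {0,1} with Pr_{X∼U}[B(X) = f_Surj(X)] ≥ 0.92, one has Pr_{X∼U}[B(X)=1] − Pr_{Z∼D}[B(Z)=1] ≥ 0.022 − ε. -/

import Mathlib

namespace GLN

noncomputable section

open Finset

/-- `M = 2^m`. -/
def MM (m : ℕ) : ℕ := 2 ^ m

/-- `N = ⌈M · m · ln 2⌉`. -/
def NN (m : ℕ) : ℕ := ⌈(MM m : ℝ) * m * Real.log 2⌉₊

/-- Strings `X ∈ [M]^N`. -/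
abbrev Str (m : ℕ) := Fin (NN m) → Fin (MM m)

/-- The uniform probability mass function on `[M]^N`. -/
def umass (m : ℕ) (_X : Str m) : ℝ := 1 / (MM m : ℝ) ^ NN m

/-- The image `Im(X) ⊆ [M]` of a string, as a finset. -/
def img {m : ℕ} (X : Str m) : Finset (Fin (MM m)) := Finset.image X Finset.univ

/-- Transition kernel of `D_y(X)`: each coordinate with `x_i = y` is replaced by a uniform
independent sample from `[M] \ {y}`; other coordinates are unchanged. -/
def kerDy (m : ℕ) (y : Fin (MM m)) (X Z : Str m) : ℝ :=
  ∏ i, if X i = y then (if Z i = y then 0 else 1 / ((MM m : ℝ) - 1))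
       else (if Z i = X i then 1 else 0)

/-- Transition kernel of `D(X)`: choose `y` uniformly in `[M]`, then apply `D_y`. -/
def kerD (m : ℕ) (X Z : Str m) : ℝ := (1 / (MM m : ℝ)) * ∑ y, kerDy m y X Z

/-- The probability mass function of the distribution `D = D(U)`. -/
def dmass (m : ℕ) (Z : Str m) : ℝ := ∑ X, umass m X * kerD m X Z

/-- Transition kernel of `D_y^inv(Z)`: each coordinate is independently replaced by `y`
with probability `1/M` and left unchanged otherwise. -/
def kerDinvy (m : ℕ) (y : Fin (MM m)) (Z W : Str m) : ℝ :=
  ∏ i, ((1 / (MM m : ℝ)) * (if W i = y then 1 else 0)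
        + (1 - 1 / (MM m : ℝ)) * (if W i = Z i then 1 else 0))

/-- Transition kernel of `D^inv(Z)`: choose `y` uniformly in `[M] \ Im(Z)`,
then apply `D_y^inv`. -/
def kerDinv (m : ℕ) (Z W : Str m) : ℝ :=
  (1 / (((img Z)ᶜ.card : ℝ))) * ∑ y ∈ (img Z)ᶜ, kerDinvy m y Z W

/-- Probability of an event under a mass function. -/
def pr {m : ℕ} (μ : Str m → ℝ) (E : Set (Str m)) : ℝ := ∑ X, E.indicator μ X

/-- Expectation of a real function under a mass function. -/
def ev {m : ℕ} (μ : Str m → ℝ) (g : Str m → ℝ) : ℝ := ∑ X, μ X * g X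

/-- The surjectivity function `f_Surj`. -/
def fSurjB (m : ℕ) (X : Str m) : Bool := decide (img X = Finset.univ)

/-- The `q.2`-th bit of the binary encoding of coordinate `x_{q.1}` of `X`;
this realizes `X` as a string of `n = N·m` bits. -/
def bit {m : ℕ} (X : Str m) (q : Fin (NN m) × Fin m) : Bool :=
  Nat.testBit (X q.1).val q.2.val

/-!
Let `R(X) = #([M] \ Im X)` count the values missed by `X`. Under `U` its factorial moments are
`E[C(R, j)] = C(M, j) (1 - j/M)^N → 1/j!` because `N ≈ M ln M`, so `R` is asymptotically Poisson(1).
The distribution `D` is `U` size-biased by `R`: `Pr_D[Z] = R(Z) Pr_U[Z] / E_U[R]`. Hence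
`Pr_U[B = 1] ≥ Pr_U[B = f_Surj] - Pr_U[R ≠ 0]`, and since `R [B = 1] ≤ 3 [B ≠ f_Surj] + (R - 3)⁺`,
`Pr_D[B = 1] ≤ (3 Pr_U[B ≠ f_Surj] + E_U[(R - 3)⁺]) / E_U[R]`. Bonferroni inequalities bound
`Pr[R = 0]`, `Pr[R = 1]`, `Pr[R = 2]` by finitely many factorial moments, and the resulting lower
bound on the advantage tends to about `0.0236 > 0.022` (without truncation it would be
`0.92 - (1 - 1/e) - 0.24 - (5.5/e - 2) ≈ 0.0245`).
-/

section Development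

open Filter Topology Real

lemma log_pow_mul_one_sub_div_pow_ceil_bounds {j : ℕ} {x : ℝ} (hx : 1 ≤ x) (hjx : 2 * j ≤ x) :
    -(2 * j * (j * log x + 1) / x) ≤ j * log x + ⌈x * log x⌉₊ * log (1 - j / x) ∧
      j * log x + ⌈x * log x⌉₊ * log (1 - j / x) ≤ 0 := by
  set N : ℝ := (⌈x * log x⌉₊ : ℝ)
  have hx0 : 0 < x := by linarith
  have hlogx : 0 ≤ log x := log_nonneg hx
  have hxj : 0 < x - j := by linarith [show (0 : ℝ) ≤ j from j.cast_nonneg]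
  have hy : 0 < 1 - j / x := by rw [one_sub_div hx0.ne']; positivity
  have hN : x * log x ≤ N := Nat.le_ceil _
  have hN' : N ≤ x * log x + 1 := (Nat.ceil_lt_add_one (by positivity)).le
  have hup : log (1 - j / x) ≤ -(j / x) := by linarith [log_le_sub_one_of_pos hy]
  have hlow : -(j / (x - j)) ≤ log (1 - j / x) := by
    have h := one_sub_inv_le_log_of_pos hy
    have : 1 - (1 - j / x)⁻¹ = -(j / (x - j)) := by field_simp; ring
    linarith
  constructor
  · have h1 : (x * log x + 1) * -(j / (x - j)) ≤ N * log (1 - j / x) := by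
      calc (x * log x + 1) * -(j / (x - j)) ≤ N * -(j / (x - j)) :=
            mul_le_mul_of_nonpos_right hN' (by simp only [neg_nonpos]; positivity)
        _ ≤ N * log (1 - j / x) := mul_le_mul_of_nonneg_left hlow (by positivity)
    have h2 : j * (j * log x + 1) / (x - j) ≤ 2 * j * (j * log x + 1) / x := by
      rw [div_le_div_iff₀ hxj hx0]
      nlinarith [show (0 : ℝ) ≤ j * (j * log x + 1) by positivity]
    have h3 : j * log x + (x * log x + 1) * -(j / (x - j)) = -(j * (j * log x + 1) / (x - j)) := by
      field_simp; ring
    linarith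
  · have : N * log (1 - j / x) ≤ x * log x * -(j / x) :=
      calc N * log (1 - j / x) ≤ N * -(j / x) := mul_le_mul_of_nonneg_left hup (by positivity)
        _ ≤ x * log x * -(j / x) := mul_le_mul_of_nonpos_right hN (neg_nonpos.2 (by positivity))
    have h' : x * log x * -(j / x) = -(j * log x) := by field_simp
    linarith

lemma tendsto_pow_mul_one_sub_div_pow_ceil (j : ℕ) :
    Tendsto (fun x : ℝ => x ^ j * (1 - j / x) ^ ⌈x * log x⌉₊) atTop (𝓝 1) := by
  have hlow : Tendsto (fun x : ℝ => -(2 * j * (j * log x + 1) / x)) atTop (𝓝 0) := by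
    have h1 := tendsto_pow_log_div_mul_add_atTop 1 0 1 one_ne_zero
    simp only [pow_one, one_mul, add_zero] at h1
    have h2 := (h1.const_mul ((2 * j * j : ℕ) : ℝ)).add
      (tendsto_inv_atTop_zero.const_mul ((2 * j : ℕ) : ℝ))
    rw [mul_zero, mul_zero, add_zero] at h2
    simpa using h2.neg.congr fun x => by push_cast; ring
  have hbounds := eventually_atTop.2 ⟨max 1 (2 * (j : ℝ)), fun x hx =>
    log_pow_mul_one_sub_div_pow_ceil_bounds (le_of_max_le_left hx) (le_of_max_le_right hx)⟩
  have ht := tendsto_of_tendsto_of_tendsto_of_le_of_le' hlow tendsto_const_nhds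
    (hbounds.mono fun _ h => h.1) (hbounds.mono fun _ h => h.2)
  have hexp := (continuous_exp.tendsto 0).comp ht
  rw [exp_zero] at hexp
  refine hexp.congr' ?_
  filter_upwards [eventually_gt_atTop (j : ℝ)] with x hx
  have hx0 : 0 < x := lt_of_le_of_lt j.cast_nonneg hx
  have hy : 0 < 1 - j / x := by rw [sub_pos, div_lt_one hx0]; exact hx
  simp only [Function.comp_apply, exp_add, ← log_pow, exp_log (pow_pos hx0 _),
    exp_log (pow_pos hy _)]

lemma tendsto_choose_mul_one_sub_div_pow_ceil (j : ℕ) :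
    Tendsto (fun n : ℕ => (n.choose j : ℝ) * (1 - j / n) ^ ⌈n * log n⌉₊) atTop
      (𝓝 (1 / j.factorial)) := by
  have hequiv := (isEquivalent_choose j).mul
    (Asymptotics.IsEquivalent.refl (u := fun n : ℕ => (1 - j / (n : ℝ)) ^ ⌈n * log n⌉₊))
  refine hequiv.symm.tendsto_nhds ?_
  have h := ((tendsto_pow_mul_one_sub_div_pow_ceil j).comp tendsto_natCast_atTop_atTop).const_mul
    (1 / (j.factorial : ℝ))
  rw [mul_one] at h
  exact h.congr fun n => by simp only [Function.comp_apply, Pi.mul_apply]; ring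

lemma NN_eq_ceil_mul_log (m : ℕ) : NN m = ⌈(MM m : ℝ) * log (MM m)⌉₊ := by
  rw [NN, MM, Nat.cast_pow, log_pow, Nat.cast_ofNat, mul_assoc]

lemma tendsto_MM : Tendsto MM atTop atTop := tendsto_pow_atTop_atTop_of_one_lt one_lt_two

lemma tendsto_choose_MM_mul_one_sub_div_pow_NN (j : ℕ) :
    Tendsto (fun m => ((MM m).choose j : ℝ) * (1 - j / MM m) ^ NN m) atTop
      (𝓝 (1 / j.factorial)) := by
  simpa only [Function.comp_def, NN_eq_ceil_mul_log] using
    (tendsto_choose_mul_one_sub_div_pow_ceil j).comp tendsto_MM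

lemma sum_choose_card_compl_image {ι α : Type*} [Fintype ι] [DecidableEq ι] [Fintype α]
    [DecidableEq α] (j : ℕ) :
    ∑ Z : ι → α, ((univ.image Z)ᶜ.card).choose j =
      (Fintype.card α).choose j * (Fintype.card α - j) ^ Fintype.card ι := by
  have hcount : ∀ T : Finset α, #{Z : ι → α | T ⊆ (univ.image Z)ᶜ} = #Tᶜ ^ Fintype.card ι := by
    intro T
    have : ({Z : ι → α | T ⊆ (univ.image Z)ᶜ} : Finset (ι → α)) =
        Fintype.piFinset fun _ => Tᶜ := by
      ext Z
      simp only [mem_filter, mem_univ, true_and, Fintype.mem_piFinset, subset_iff, mem_compl,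
        mem_image]
      grind
    rw [this, Fintype.card_piFinset, prod_const, card_univ]
  calc ∑ Z : ι → α, ((univ.image Z)ᶜ.card).choose j
      = ∑ Z : ι → α, ∑ T ∈ powersetCard j univ, if T ⊆ (univ.image Z)ᶜ then 1 else 0 := by
        refine Finset.sum_congr rfl fun Z _ => ?_
        rw [← card_powersetCard, Finset.sum_boole, Nat.cast_id]
        congr 1
        ext T
        simp [and_comm]
    _ = ∑ T ∈ powersetCard j (univ : Finset α), #{Z : ι → α | T ⊆ (univ.image Z)ᶜ} := by
        rw [Finset.sum_comm]
        simp only [Finset.sum_boole, Nat.cast_id]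
    _ = _ := by
        rw [Finset.sum_congr rfl fun T hT => by rw [hcount, card_compl, (mem_powersetCard.1 hT).2],
          sum_const, card_powersetCard, card_univ, smul_eq_mul]

section Expectation

variable {m : ℕ} (μ : Str m → ℝ)

lemma ev_add (f g : Str m → ℝ) : ev μ (fun X => f X + g X) = ev μ f + ev μ g := by
  simp only [ev, mul_add, sum_add_distrib]

lemma ev_sub (f g : Str m → ℝ) : ev μ (fun X => f X - g X) = ev μ f - ev μ g := by
  simp only [ev, mul_sub, sum_sub_distrib]

lemma ev_const_mul (c : ℝ) (f : Str m → ℝ) : ev μ (fun X => c * f X) = c * ev μ f := by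
  simp only [ev, mul_sum]; exact sum_congr rfl fun X _ => by ring

lemma ev_sum {ι : Type*} (s : Finset ι) (f : ι → Str m → ℝ) :
    ev μ (fun X => ∑ i ∈ s, f i X) = ∑ i ∈ s, ev μ (f i) := by
  simp only [ev, mul_sum]; exact sum_comm

lemma ev_mono {μ} (hμ : ∀ X, 0 ≤ μ X) {f g : Str m → ℝ} (h : ∀ X, f X ≤ g X) :
    ev μ f ≤ ev μ g :=
  sum_le_sum fun X _ => mul_le_mul_of_nonneg_left (h X) (hμ X)

lemma pr_eq_ev (E : Set (Str m)) [DecidablePred (· ∈ E)] :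
    pr μ E = ev μ (fun X => if X ∈ E then 1 else 0) := by
  simp only [pr, ev]
  exact sum_congr rfl fun X _ => by by_cases hX : X ∈ E <;> simp [hX]

end Expectation

lemma umass_nonneg (m : ℕ) (X : Str m) : 0 ≤ umass m X := by unfold umass; positivity

lemma ev_umass (m : ℕ) (f : Str m → ℝ) : ev (umass m) f = (∑ X, f X) / (MM m : ℝ) ^ NN m := by
  simp only [ev, umass, sum_div]; exact sum_congr rfl fun X _ => by ring

lemma ev_umass_const (m : ℕ) (c : ℝ) : ev (umass m) (fun _ => c) = c := by
  have : (MM m : ℝ) ^ NN m ≠ 0 := by simp [MM]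
  rw [ev_umass, sum_const, card_univ, Fintype.card_fun, Fintype.card_fin, Fintype.card_fin,
    nsmul_eq_mul]
  push_cast
  field_simp

def numMissing {m : ℕ} (X : Str m) : ℕ := (img X)ᶜ.card

lemma ev_umass_choose_numMissing (m j : ℕ) :
    ev (umass m) (fun X => ((numMissing X).choose j : ℝ)) =
      (MM m).choose j * (1 - j / MM m) ^ NN m := by
  have hsum := sum_choose_card_compl_image (ι := Fin (NN m)) (α := Fin (MM m)) j
  simp only [Fintype.card_fin] at hsum
  have hM : (MM m : ℝ) ≠ 0 := by simp [MM]
  rw [ev_umass]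
  unfold numMissing img
  rw [← Nat.cast_sum, hsum]
  rcases le_or_gt j (MM m) with hj | hj
  · rw [Nat.cast_mul, Nat.cast_pow, Nat.cast_sub hj, mul_div_assoc, ← div_pow, sub_div,
      div_self hM]
  · simp [Nat.choose_eq_zero_of_lt hj]

lemma tendsto_ev_choose_numMissing (j : ℕ) :
    Tendsto (fun m => ev (umass m) (fun X => ((numMissing X).choose j : ℝ))) atTop
      (𝓝 (1 / j.factorial)) := by
  simpa only [ev_umass_choose_numMissing] using tendsto_choose_MM_mul_one_sub_div_pow_NN j

/-- Truncation after `r + 1` terms of the inclusion–exclusion expansion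
`[n = k] = ∑ᵢ (-1)ⁱ C(n, k) C(n - k, i)`. -/
def bonferroni (k r n : ℕ) : ℝ :=
  ∑ i ∈ range (r + 1), (-1) ^ i * ((n.choose k : ℝ) * (n - k).choose i)

lemma bonferroni_of_lt {k n : ℕ} (r : ℕ) (h : n < k) : bonferroni k r n = 0 := by
  simp [bonferroni, Nat.choose_eq_zero_of_lt h]

lemma bonferroni_self (k r : ℕ) : bonferroni k r k = 1 := by
  simp [bonferroni, sum_range_succ', Nat.choose_zero_succ]

lemma bonferroni_of_gt {k n : ℕ} (r : ℕ) (h : k < n) :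
    bonferroni k r n = n.choose k * ((-1) ^ r * (n - k - 1).choose r) := by
  have halt : (∑ i ∈ range (r + 1), (-1) ^ i * ((n - k).choose i : ℝ)) =
      (-1) ^ r * (n - k - 1).choose r := by
    obtain ⟨d, hd⟩ : ∃ d, n - k = d + 1 := ⟨n - k - 1, by omega⟩
    rw [hd, Nat.add_sub_cancel]
    exact_mod_cast Int.alternating_sum_range_choose_eq_choose
  rw [← halt, bonferroni, mul_sum]
  exact sum_congr rfl fun i _ => by ring

lemma indicator_le_bonferroni {r : ℕ} (hr : Even r) (k n : ℕ) :
    (if n = k then 1 else 0) ≤ bonferroni k r n := by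
  rcases lt_trichotomy n k with h | rfl | h
  · rw [bonferroni_of_lt r h, if_neg h.ne]
  · rw [bonferroni_self, if_pos rfl]
  · rw [bonferroni_of_gt r h, if_neg h.ne', hr.neg_one_pow, one_mul]
    positivity

lemma bonferroni_le_indicator {r : ℕ} (hr : Odd r) (k n : ℕ) :
    bonferroni k r n ≤ if n = k then 1 else 0 := by
  rcases lt_trichotomy n k with h | rfl | h
  · rw [bonferroni_of_lt r h, if_neg h.ne]
  · rw [bonferroni_self, if_pos rfl]
  · rw [bonferroni_of_gt r h, if_neg h.ne', hr.neg_one_pow, neg_one_mul, mul_neg,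
      neg_nonpos]
    positivity

lemma ev_bonferroni_numMissing (m k r : ℕ) :
    ev (umass m) (fun X => bonferroni k r (numMissing X)) =
      ∑ i ∈ range (r + 1), (-1) ^ i * (k + i).choose k *
        ev (umass m) (fun X => ((numMissing X).choose (k + i) : ℝ)) := by
  simp only [bonferroni, ev_sum]
  refine sum_congr rfl fun i _ => ?_
  rw [mul_assoc, ← ev_const_mul, ← ev_const_mul]
  congr 1
  funext X
  congr 1
  have := Nat.choose_mul (n := numMissing X) (Nat.le_add_right k i)
  rw [Nat.add_sub_cancel_left] at this
  rw [← Nat.cast_mul, ← Nat.cast_mul, mul_comm ((k + i).choose k), this]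

def bonferroniLimit (k r : ℕ) : ℝ :=
  1 / k.factorial * ∑ i ∈ range (r + 1), (-1 : ℝ) ^ i / i.factorial

lemma tendsto_ev_bonferroni_numMissing (k r : ℕ) :
    Tendsto (fun m => ev (umass m) (fun X => bonferroni k r (numMissing X))) atTop
      (𝓝 (bonferroniLimit k r)) := by
  simp only [ev_bonferroni_numMissing, bonferroniLimit, mul_sum]
  refine tendsto_finsetSum _ fun i _ => ?_
  convert (tendsto_ev_choose_numMissing (k + i)).const_mul ((-1 : ℝ) ^ i * (k + i).choose k)
    using 2
  rw [← Nat.add_choose_mul_factorial_mul_factorial k i, Nat.choose_symm_add]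
  have : ((k + i).choose i : ℝ) ≠ 0 := mod_cast (Nat.choose_pos (Nat.le_add_left i k)).ne'
  push_cast
  field_simp

lemma one_lt_MM {m : ℕ} (hm : 1 ≤ m) : (1 : ℝ) < MM m := by
  unfold MM; push_cast; exact one_lt_pow₀ one_lt_two (by omega)

lemma sum_kerDy {m : ℕ} (hm : 1 ≤ m) (y : Fin (MM m)) (Z : Str m) :
    ∑ X : Str m, kerDy m y X Z =
      if y ∈ img Z then 0 else ((MM m : ℝ) / (MM m - 1)) ^ NN m := by
  have hM : (MM m : ℝ) - 1 ≠ 0 := (sub_pos.2 (one_lt_MM hm)).ne'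
  let F : Fin (NN m) → Fin (MM m) → ℝ := fun i x =>
    if x = y then (if Z i = y then 0 else 1 / ((MM m : ℝ) - 1)) else (if Z i = x then 1 else 0)
  have hrow : ∀ i, ∑ x, F i x = if Z i ≠ y then (MM m : ℝ) / (MM m - 1) else 0 := by
    intro i
    by_cases hi : Z i = y
    · simp only [hi, ne_eq, not_true_eq_false, if_false]
      exact sum_eq_zero fun x _ => by simp only [F]; split_ifs <;> simp_all
    · have : ∀ x, F i x =
          (if x = y then 1 / ((MM m : ℝ) - 1) else 0) + (if Z i = x then 1 else 0) := by
        intro x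
        by_cases hx : x = y <;> simp [F, hx, hi]
      rw [Fintype.sum_congr _ _ this, sum_add_distrib, sum_ite_eq', sum_ite_eq,
        if_pos (mem_univ _), if_pos (mem_univ _), if_pos hi]
      field_simp
      ring
  rw [show ∑ X : Str m, kerDy m y X Z = ∑ X : Str m, ∏ i, F i (X i) from rfl, ← Fintype.prod_sum,
    Fintype.prod_congr _ _ hrow, Fintype.prod_ite_zero, prod_const, card_univ, Fintype.card_fin]
  simp only [img, mem_image, mem_univ, true_and, ← not_exists]
  exact ite_not _ _ _

lemma ev_umass_numMissing (m : ℕ) :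
    ev (umass m) (fun X => (numMissing X : ℝ)) = MM m * (1 - 1 / MM m) ^ NN m := by
  simpa using ev_umass_choose_numMissing m 1

lemma dmass_eq {m : ℕ} (hm : 1 ≤ m) (Z : Str m) :
    dmass m Z = umass m Z * numMissing Z / ev (umass m) (fun X => (numMissing X : ℝ)) := by
  have hM1 : (MM m : ℝ) - 1 ≠ 0 := (sub_pos.2 (one_lt_MM hm)).ne'
  have hM : (MM m : ℝ) ≠ 0 := by linarith [one_lt_MM hm]
  have hmiss : ∑ y, (if y ∈ img Z then 0 else ((MM m : ℝ) / (MM m - 1)) ^ NN m) =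
      numMissing Z * ((MM m : ℝ) / (MM m - 1)) ^ NN m := by
    rw [sum_ite, sum_const_zero, zero_add, sum_const, nsmul_eq_mul, numMissing, filter_not,
      filter_mem_eq_inter, univ_inter, compl_eq_univ_sdiff]
  simp only [dmass, kerD, umass, ← mul_sum]
  rw [sum_comm, Fintype.sum_congr _ _ (sum_kerDy hm · Z), hmiss, ev_umass_numMissing,
    one_sub_div hM]
  field_simp
  rw [mul_assoc, ← mul_pow, div_mul_div_cancel₀ hM1, div_self hM, one_pow, mul_one]

lemma fSurjB_eq_true_iff {m : ℕ} (X : Str m) : fSurjB m X = true ↔ numMissing X = 0 := by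
  rw [fSurjB, decide_eq_true_iff, numMissing, card_eq_zero, compl_eq_empty_iff]

lemma max_sub_three_zero_eq (n : ℕ) :
    max ((n : ℝ) - 3) 0 =
      n - 3 + 3 * (if n = 0 then 1 else 0) + 2 * (if n = 1 then 1 else 0) +
        (if n = 2 then 1 else 0) := by
  rcases n with _ | _ | _ | n
  · norm_num
  · norm_num
  · norm_num
  · rw [if_neg (by omega), if_neg (by omega), if_neg (by omega),
      max_eq_left (by push_cast; linarith)]
    ring

lemma max_sub_three_zero_le_bonferroni {r : ℕ} (hr : Even r) (n : ℕ) :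
    max ((n : ℝ) - 3) 0 ≤
      n - 3 + 3 * bonferroni 0 r n + 2 * bonferroni 1 r n + bonferroni 2 r n := by
  rw [max_sub_three_zero_eq]
  gcongr <;> exact indicator_le_bonferroni hr _ _

lemma agree_sub_one_add_bonferroni_le {r : ℕ} (hr : Odd r) {b f : Bool} {n : ℕ}
    (hf : f = true ↔ n = 0) :
    (if b = f then 1 else 0) - 1 + bonferroni 0 r n ≤ if b = true then (1 : ℝ) else 0 := by
  have h := bonferroni_le_indicator hr 0 n
  cases b <;> cases f <;> by_cases hn : n = 0 <;> simp_all
  linarith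

lemma weight_le_disagree_add_max {b f : Bool} {n : ℕ} (hf : f = true ↔ n = 0) :
    (if b = true then (n : ℝ) else 0) ≤
      3 * (1 - if b = f then 1 else 0) + max ((n : ℝ) - 3) 0 := by
  cases b <;> cases f <;> by_cases hn : n = 0 <;> simp_all
  linarith [le_max_left ((n : ℝ) - 3) 0]

lemma ev_umass_numMissing_pos {m : ℕ} (hm : 1 ≤ m) :
    0 < ev (umass m) (fun X => (numMissing X : ℝ)) := by
  have hM := one_lt_MM hm
  have : 0 < 1 - 1 / (MM m : ℝ) := by rw [sub_pos, div_lt_one (by linarith)]; exact hM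
  rw [ev_umass_numMissing]
  positivity

lemma pr_dmass_eq {m : ℕ} (hm : 1 ≤ m) (E : Set (Str m)) [DecidablePred (· ∈ E)] :
    pr (dmass m) E = ev (umass m) (fun X => if X ∈ E then (numMissing X : ℝ) else 0) /
      ev (umass m) (fun X => (numMissing X : ℝ)) := by
  set e := ev (umass m) (fun X => (numMissing X : ℝ))
  simp only [pr, ev, sum_div]
  refine sum_congr rfl fun X _ => ?_
  by_cases hX : X ∈ E <;> simp [hX, dmass_eq hm, e, mul_div_assoc]

/-- From `Pr_U[B = 1] ≥ α - 1 + Pr_U[R = 0]` and `E_U[R; B = 1] ≤ 3 (1 - α) + E_U[(R - 3)⁺]`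
for `R = numMissing`, with `[R = k]` replaced by its Bonferroni bounds of orders `r` and `s`. -/
def advantageBound (α : ℝ) (r s m : ℕ) : ℝ :=
  α - 1 + ev (umass m) (fun X => bonferroni 0 r (numMissing X)) -
    (3 * (1 - α) + ev (umass m) (fun X => (numMissing X : ℝ)) - 3 +
      3 * ev (umass m) (fun X => bonferroni 0 s (numMissing X)) +
      2 * ev (umass m) (fun X => bonferroni 1 s (numMissing X)) +
      ev (umass m) (fun X => bonferroni 2 s (numMissing X))) /
    ev (umass m) (fun X => (numMissing X : ℝ))

lemma advantageBound_le {m : ℕ} (hm : 1 ≤ m) {r s : ℕ} (hr : Odd r) (hs : Even s) {α : ℝ}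
    (B : Str m → Bool) (hB : α ≤ pr (umass m) {X : Str m | B X = fSurjB m X}) :
    advantageBound α r s m ≤
      pr (umass m) {X : Str m | B X = true} - pr (dmass m) {Z : Str m | B Z = true} := by
  have hU := umass_nonneg m
  have hlow : α - 1 + ev (umass m) (fun X => bonferroni 0 r (numMissing X)) ≤
      pr (umass m) {X : Str m | B X = true} := by
    have h := ev_mono hU fun X =>
      agree_sub_one_add_bonferroni_le hr (b := B X) (fSurjB_eq_true_iff X)
    simp only [pr_eq_ev, Set.mem_ofPred_eq, ev_add, ev_sub, ev_umass_const] at h hB ⊢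
    linarith
  have hup : ev (umass m) (fun X => if B X = true then (numMissing X : ℝ) else 0) ≤
      3 * (1 - α) + ev (umass m) (fun X => (numMissing X : ℝ)) - 3 +
      3 * ev (umass m) (fun X => bonferroni 0 s (numMissing X)) +
      2 * ev (umass m) (fun X => bonferroni 1 s (numMissing X)) +
      ev (umass m) (fun X => bonferroni 2 s (numMissing X)) := by
    have h := ev_mono hU fun X =>
      (weight_le_disagree_add_max (b := B X) (fSurjB_eq_true_iff X)).trans
        (add_le_add le_rfl (max_sub_three_zero_le_bonferroni hs (numMissing X)))
    simp only [pr_eq_ev, Set.mem_ofPred_eq, ev_add, ev_sub, ev_const_mul, ev_umass_const]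
      at h hB ⊢
    linarith
  have hE := ev_umass_numMissing_pos hm
  rw [pr_dmass_eq hm, advantageBound]
  simp only [Set.mem_ofPred_eq]
  have := div_le_div_of_nonneg_right hup hE.le
  linarith

lemma tendsto_advantageBound (α : ℝ) (r s : ℕ) :
    Tendsto (advantageBound α r s) atTop
      (𝓝 (α - 1 + bonferroniLimit 0 r - (3 * (1 - α) + 1 - 3 + 3 * bonferroniLimit 0 s +
        2 * bonferroniLimit 1 s + bonferroniLimit 2 s))) := by
  have hR : Tendsto (fun m => ev (umass m) (fun X => (numMissing X : ℝ))) atTop (𝓝 1) := by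
    simpa using tendsto_ev_choose_numMissing 1
  have hB := tendsto_ev_bonferroni_numMissing
  have hnum := ((((tendsto_const_nhds (x := 3 * (1 - α))).add hR).sub
    (tendsto_const_nhds (x := (3 : ℝ)))).add ((hB 0 s).const_mul 3)).add
      ((hB 1 s).const_mul 2) |>.add (hB 2 s)
  have h := ((tendsto_const_nhds (x := α - 1)).add (hB 0 r)).sub (hnum.div hR one_ne_zero)
  rw [div_one] at h
  exact h

end Development

/-- for every `ε > 0` and all sufficiently large `m`, every Boolean function
`B` agreeing with `f_Surj` on at least a `0.92` fraction of inputs (under `U`) satisfies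
`Pr_U[B = 1] − Pr_D[B = 1] ≥ 0.022 − ε`. -/
theorem stmt11 : ∀ ε : ℝ, 0 < ε → ∃ m0 : ℕ, ∀ m : ℕ, m0 ≤ m →
    ∀ B : Str m → Bool,
      (0.92 : ℝ) ≤ pr (umass m) {X : Str m | B X = fSurjB m X} →
      (0.022 : ℝ) - ε ≤
        pr (umass m) {X : Str m | B X = true} - pr (dmass m) {Z : Str m | B Z = true} := by
  intro ε _
  have hlim := tendsto_advantageBound 0.92 7 6
  have hpos : (0.022 : ℝ) < 0.92 - 1 + bonferroniLimit 0 7 - (3 * (1 - 0.92) + 1 - 3 +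
      3 * bonferroniLimit 0 6 + 2 * bonferroniLimit 1 6 + bonferroniLimit 2 6) := by
    norm_num [bonferroniLimit, sum_range_succ, Nat.factorial]
  obtain ⟨m0, hm0⟩ := Filter.eventually_atTop.1
    ((hlim.eventually (lt_mem_nhds hpos)).and (Filter.eventually_ge_atTop 1))
  refine ⟨m0, fun m hm B hB => ?_⟩
  have := advantageBound_le (hm0 m hm).2 ⟨3, rfl⟩ ⟨3, rfl⟩ B hB
  linarith [(hm0 m hm).1]

end
end GLN
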